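/- Let (M, 𝒜) be an uncertainty matroid on a finite ground set E. Then the set of all elements of E that are uncertain and uncolored is a feasible query. -/

import Mathlib

open Matroid

variable {α : Type*}

/-- `A` is an uncertainty area function for `M`: each element of the ground set gets a
nonempty bounded set of reals. -/
def IsAreaFun (M : Matroid α) (A : α → Set ℝ) : Prop :=
  ∀ e ∈ M.E, (A e).Nonempty ∧ BddBelow (A e) ∧ BddAbove (A e)

/-- A realization: a weight function with `w e ∈ A e` for every element of the ground set. -/
def Realization (M : Matroid α) (A : α → Set ℝ) (w : α → ℝ) : Prop :=
  ∀ e ∈ M.E, w e ∈ A e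

/-- The total `w`-weight of a set. -/
noncomputable def setWeight (w : α → ℝ) (T : Set α) : ℝ := ∑ᶠ e ∈ T, w e

/-- A `w`-basis: a basis of `M` of minimum total `w`-weight. -/
def IsMinBasis (M : Matroid α) (w : α → ℝ) (T : Set α) : Prop :=
  M.IsBase T ∧ ∀ B, M.IsBase B → setWeight w T ≤ setWeight w B

/-- A uniformly optimal basis (an `A`-basis): a `w`-basis for every realization `w`. -/
def IsUOB (M : Matroid α) (A : α → Set ℝ) (T : Set α) : Prop :=
  ∀ w, Realization M A w → IsMinBasis M w T

/-- An element is certain if its area is a singleton. -/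
def Certain (A : α → Set ℝ) (e : α) : Prop := ∃ r : ℝ, A e = {r}

/-- `e` is blue if every realization admits a minimum weight basis containing `e`. -/
def Blue (M : Matroid α) (A : α → Set ℝ) (e : α) : Prop :=
  ∀ w, Realization M A w → ∃ T, IsMinBasis M w T ∧ e ∈ T

/-- `e` is red if every realization admits a minimum weight basis avoiding `e`. -/
def Red (M : Matroid α) (A : α → Set ℝ) (e : α) : Prop :=
  ∀ w, Realization M A w → ∃ T, IsMinBasis M w T ∧ e ∉ T

/-- `e` is colored if it is blue or red. -/
def Colored (M : Matroid α) (A : α → Set ℝ) (e : α) : Prop :=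
  Blue M A e ∨ Red M A e

/-- `B` is a revelation of `X` in `(M, A)`: on `X` each area is replaced by a singleton
subset of itself, and outside `X` areas are unchanged. -/
def IsRevelation (M : Matroid α) (A : α → Set ℝ) (X : Set α) (B : α → Set ℝ) : Prop :=
  (∀ e ∈ X, ∃ r ∈ A e, B e = {r}) ∧ ∀ e ∉ X, B e = A e

/-- `F ⊆ E` is a feasible query if every revelation of `F` admits a uniformly optimal basis. -/
def FeasibleQuery (M : Matroid α) (A : α → Set ℝ) (F : Set α) : Prop :=
  F ⊆ M.E ∧ ∀ B, IsRevelation M A F B → ∃ T, IsUOB M B T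

/-!
If `g` is uncertain and `w` a realization, moving `w g` to another admissible value shifts the
weight of every basis by one of two distinct constants, according as the basis contains `g` or
not. Moving in the direction that favors a status of `g` (containing or avoiding it) turns the
minimum bases into exactly those old minimum bases having that status, provided one of them has
it. Comparing `w` with the moved weight in the right order, any attainable color of `g` can
therefore be attained together with any other attainable property, and by induction the colors
of all uncertain elements can be attained simultaneously. Two bases realizing all these colors
agree on the uncertain elements, so the difference of their weights is the same for every
realization: one such basis that is minimum for a single realization is minimum for all. After
revealing the uncertain uncolored elements every uncertain element is colored, since shrinking
the areas only removes realizations. No matroid structure is used: the argument works for any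
finite family of subsets of the ground set.
-/

open Function Set

section Weights

variable {S T D U : Set α}

lemma setWeight_update_of_notMem [DecidableEq α] (w : α → ℝ) {g : α} (a : ℝ) (hg : g ∉ S) :
    setWeight (update w g a) S = setWeight w S :=
  finsum_mem_congr rfl fun _ he => update_of_ne (ne_of_mem_of_not_mem he hg) a w

lemma setWeight_update_of_mem [DecidableEq α] (w : α → ℝ) {g : α} (a : ℝ) (hS : S.Finite)
    (hg : g ∈ S) : setWeight (update w g a) S = setWeight w S + (a - w g) := by
  have hgS : g ∉ S \ {g} := fun h => h.2 rfl
  have hrest := setWeight_update_of_notMem w a hgS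
  rw [setWeight, setWeight] at hrest
  rw [← insert_sdiff_self_of_mem hg, setWeight, setWeight, finsum_mem_insert _ hgS hS.sdiff,
    finsum_mem_insert _ hgS hS.sdiff, hrest, update_self]
  ring

lemma setWeight_sub_setWeight_eq {w w' : α → ℝ} (hT : T.Finite) (hD : D.Finite)
    (hTD : T ∩ U = D ∩ U) (hw : EqOn w w' ((T ∪ D) \ U)) :
    setWeight w T - setWeight w D = setWeight w' T - setWeight w' D := by
  have hsplit : ∀ (v : α → ℝ) {S : Set α}, S.Finite →
      setWeight v S = setWeight v (S ∩ U) + setWeight v (S \ U) :=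
    fun v S hS => (finsum_mem_inter_add_sdiff U hS).symm
  have hT' : setWeight w (T \ U) = setWeight w' (T \ U) :=
    finsum_mem_congr rfl fun e he => hw ⟨Or.inl he.1, he.2⟩
  have hD' : setWeight w (D \ U) = setWeight w' (D \ U) :=
    finsum_mem_congr rfl fun e he => hw ⟨Or.inr he.1, he.2⟩
  rw [hsplit w hT, hsplit w hD, hsplit w' hT, hsplit w' hD, hT', hD', hTD]
  ring

end Weights

def IsMinIn (𝔉 : Set (Set α)) (w : α → ℝ) (T : Set α) : Prop :=
  T ∈ 𝔉 ∧ ∀ B ∈ 𝔉, setWeight w T ≤ setWeight w B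

/-- `Blue M A e` and `Red M A e` are `MinAttains {B | M.IsBase B} (Realization M A) P` for
`P = (e ∈ ·)` and `P = (e ∉ ·)`. -/
def MinAttains (𝔉 : Set (Set α)) (W : (α → ℝ) → Prop) (P : Set α → Prop) : Prop :=
  ∀ w, W w → ∃ T, IsMinIn 𝔉 w T ∧ P T

def SplitShift (𝔉 : Set (Set α)) (P : Set α → Prop) (w v : α → ℝ) : Prop :=
  ∃ c₁ c₂ : ℝ, c₁ ≠ c₂ ∧ ∀ S ∈ 𝔉,
    (P S → setWeight v S = setWeight w S + c₁) ∧ (¬ P S → setWeight v S = setWeight w S + c₂)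

section Families

variable {𝔉 : Set (Set α)} {W : (α → ℝ) → Prop} {P Q : Set α → Prop}

lemma exists_isMinIn (h𝔉 : 𝔉.Finite) (hne : 𝔉.Nonempty) (w : α → ℝ) : ∃ T, IsMinIn 𝔉 w T :=
  let ⟨T, hT, hmin⟩ := exists_min_image 𝔉 (setWeight w) h𝔉 hne
  ⟨T, hT, hmin⟩

lemma MinAttains.imp (h : MinAttains 𝔉 W P) (hPQ : ∀ T, P T → Q T) : MinAttains 𝔉 W Q :=
  fun w hw => (h w hw).imp fun T hT => ⟨hT.1, hPQ T hT.2⟩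

lemma MinAttains.mono {W' : (α → ℝ) → Prop} (h : MinAttains 𝔉 W P) (hW : ∀ w, W' w → W w) :
    MinAttains 𝔉 W' P :=
  fun w hw => h w (hW w hw)

lemma isMinIn_iff_of_shift {w v : α → ℝ} {c₁ c₂ : ℝ} (hc : c₁ < c₂)
    (hP : ∀ S ∈ 𝔉, P S → setWeight v S = setWeight w S + c₁)
    (hnP : ∀ S ∈ 𝔉, ¬ P S → setWeight v S = setWeight w S + c₂)
    (hex : ∃ T, IsMinIn 𝔉 w T ∧ P T) (D : Set α) :
    IsMinIn 𝔉 v D ↔ IsMinIn 𝔉 w D ∧ P D := by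
  obtain ⟨T, ⟨hT, hTmin⟩, hPT⟩ := hex
  have hlower : ∀ S ∈ 𝔉, setWeight w S + c₁ ≤ setWeight v S := fun S hS => by
    by_cases hPS : P S
    · rw [hP S hS hPS]
    · rw [hnP S hS hPS]; linarith
  constructor
  · rintro ⟨hD, hDmin⟩
    have hDT := hDmin T hT
    rw [hP T hT hPT] at hDT
    have hPD : P D := by
      by_contra hPD
      rw [hnP D hD hPD] at hDT
      linarith [hTmin D hD]
    rw [hP D hD hPD] at hDT
    exact ⟨⟨hD, fun R hR => by linarith [hTmin R hR]⟩, hPD⟩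
  · rintro ⟨⟨hD, hDmin⟩, hPD⟩
    refine ⟨hD, fun R hR => ?_⟩
    rw [hP D hD hPD]
    linarith [hDmin R hR, hlower R hR]

lemma SplitShift.exists_isMinIn_and {w v : α → ℝ} (h : SplitShift 𝔉 P w v)
    (hPw : ∃ T, IsMinIn 𝔉 w T ∧ P T) (hPv : ∃ T, IsMinIn 𝔉 v T ∧ P T)
    (hQw : ∃ T, IsMinIn 𝔉 w T ∧ Q T) (hQv : ∃ T, IsMinIn 𝔉 v T ∧ Q T) :
    ∃ T, IsMinIn 𝔉 w T ∧ P T ∧ Q T := by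
  obtain ⟨c₁, c₂, hc, hshift⟩ := h
  rcases hc.lt_or_gt with hlt | hgt
  · obtain ⟨D, hD, hQD⟩ := hQv
    obtain ⟨hDw, hPD⟩ := (isMinIn_iff_of_shift hlt (fun S hS => (hshift S hS).1)
      (fun S hS => (hshift S hS).2) hPw D).1 hD
    exact ⟨D, hDw, hPD, hQD⟩
  · -- read backwards, the shift from `v` to `w` favors `P`, so every `w`-minimum satisfies `P`
    obtain ⟨D, hD, hQD⟩ := hQw
    have hPD := ((isMinIn_iff_of_shift (neg_lt_neg hgt)
      (fun S hS hPS => by linarith [(hshift S hS).1 hPS])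
      (fun S hS hPS => by linarith [(hshift S hS).2 hPS]) hPv D).1 hD).2
    exact ⟨D, hD, hPD, hQD⟩

lemma MinAttains.and (hsplit : ∀ w, W w → ∃ v, W v ∧ SplitShift 𝔉 P w v)
    (hP : MinAttains 𝔉 W P) (hQ : MinAttains 𝔉 W Q) :
    MinAttains 𝔉 W fun T => P T ∧ Q T := fun w hw =>
  let ⟨v, hv, h⟩ := hsplit w hw
  h.exists_isMinIn_and (hP w hw) (hP v hv) (hQ w hw) (hQ v hv)

lemma splitShift_update [DecidableEq α] (hfin : ∀ S ∈ 𝔉, S.Finite) {w : α → ℝ} {g : α} {a : ℝ}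
    (ha : a ≠ w g) (p : Prop) : SplitShift 𝔉 (fun S => g ∈ S ↔ p) w (update w g a) := by
  by_cases hp : p
  · refine ⟨a - w g, 0, sub_ne_zero.2 ha, fun S hS => ⟨fun hg => ?_, fun hg => ?_⟩⟩
    · exact setWeight_update_of_mem w a (hfin S hS) (hg.2 hp)
    · rw [add_zero]
      exact setWeight_update_of_notMem w a fun h => hg (iff_of_true h hp)
  · refine ⟨0, a - w g, (sub_ne_zero.2 ha).symm, fun S hS => ⟨fun hg => ?_, fun hg => ?_⟩⟩
    · rw [add_zero]
      exact setWeight_update_of_notMem w a fun h => hp (hg.1 h)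
    · exact setWeight_update_of_mem w a (hfin S hS) (by_contra fun h => hg (iff_of_false h hp))

lemma MinAttains.forall_mem {ι : Type*} {I : Set ι} (hI : I.Finite) {P : ι → Set α → Prop}
    (hexists : MinAttains 𝔉 W fun _ => True)
    (hsplit : ∀ i ∈ I, ∀ w, W w → ∃ v, W v ∧ SplitShift 𝔉 (P i) w v)
    (hP : ∀ i ∈ I, MinAttains 𝔉 W (P i)) :
    MinAttains 𝔉 W fun T => ∀ i ∈ I, P i T := by
  induction I, hI using Set.Finite.induction_on with
  | empty => exact hexists.imp fun _ _ _ h => absurd h (notMem_empty _)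
  | @insert i I _ _ ih =>
    have hI := ih (fun j hj => hsplit j (mem_insert_of_mem i hj))
      (fun j hj => hP j (mem_insert_of_mem i hj))
    exact ((MinAttains.and (hsplit i (mem_insert i I)) (hP i (mem_insert i I)) hI).imp
      fun T => forall_mem_insert (P := fun j => P j T) |>.2)

lemma exists_forall_isMinIn_of_eqOn {E U : Set α} (hE : E.Finite) (h𝔉 : ∀ S ∈ 𝔉, S ⊆ E)
    (hW : ∀ w w', W w → W w' → EqOn w w' (E \ U)) (hP : MinAttains 𝔉 W P)
    (hPU : ∀ T D, P T → P D → T ∩ U = D ∩ U) :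
    ∃ T, ∀ w, W w → IsMinIn 𝔉 w T := by
  by_cases hW₀ : ∀ w, ¬ W w
  · exact ⟨∅, fun w hw => absurd hw (hW₀ w)⟩
  obtain ⟨w₀, hw₀⟩ := not_forall_not.1 hW₀
  obtain ⟨T, ⟨hT, hTmin⟩, hPT⟩ := hP w₀ hw₀
  refine ⟨T, fun w hw => ⟨hT, fun R hR => ?_⟩⟩
  obtain ⟨D, ⟨hD, hDmin⟩, hPD⟩ := hP w hw
  have hTD := setWeight_sub_setWeight_eq (hE.subset (h𝔉 T hT)) (hE.subset (h𝔉 D hD))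
    (hPU T D hPT hPD) ((hW w w₀ hw hw₀).mono (sdiff_subset_sdiff_left (union_subset (h𝔉 T hT)
      (h𝔉 D hD))))
  linarith [hTmin D hD, hDmin R hR]

end Families

section Realizations

variable {M : Matroid α} {A B : α → Set ℝ}

lemma exists_ne_of_not_certain {g : α} {x : ℝ} (hg : ¬ Certain A g) (hx : x ∈ A g) :
    ∃ a ∈ A g, a ≠ x := by
  by_contra! h
  exact hg ⟨x, eq_singleton_iff_unique_mem.2 ⟨hx, h⟩⟩

lemma Realization.update [DecidableEq α] {w : α → ℝ} (hw : Realization M A w) {g : α} {a : ℝ}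
    (ha : a ∈ A g) : Realization M A (update w g a) := by
  intro e he
  rcases eq_or_ne e g with rfl | hne
  · rwa [update_self]
  · rw [update_of_ne hne]
    exact hw e he

lemma Realization.eqOn {w w' : α → ℝ} (hw : Realization M A w) (hw' : Realization M A w') :
    EqOn w w' (M.E \ {e ∈ M.E | ¬ Certain A e}) := by
  rintro e ⟨heE, he⟩
  obtain ⟨r, hr⟩ : Certain A e := by_contra fun h => he ⟨heE, h⟩
  have hwe := hw e heE
  have hw'e := hw' e heE
  rw [hr, mem_singleton_iff] at hwe hw'e
  rw [hwe, hw'e]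

lemma Realization.mono {w : α → ℝ} (hBA : ∀ e, B e ⊆ A e) (hw : Realization M B w) :
    Realization M A w :=
  fun e he => hBA e (hw e he)

theorem exists_forall_isMinIn_of_colored {𝔉 : Set (Set α)} (hE : M.E.Finite)
    (h𝔉 : ∀ S ∈ 𝔉, S ⊆ M.E) (hne : 𝔉.Nonempty)
    (hcol : ∀ e ∈ M.E, ¬ Certain A e →
      MinAttains 𝔉 (Realization M A) (e ∈ ·) ∨
        MinAttains 𝔉 (Realization M A) (e ∉ ·)) :
    ∃ T, ∀ w, Realization M A w → IsMinIn 𝔉 w T := by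
  classical
  set U := {e ∈ M.E | ¬ Certain A e}
  set X := {e | MinAttains 𝔉 (Realization M A) (e ∈ ·)}
  have hcolU : ∀ e ∈ U, MinAttains 𝔉 (Realization M A) fun T => e ∈ T ↔ e ∈ X := by
    rintro e ⟨heE, heu⟩
    by_cases heX : e ∈ X
    · exact MinAttains.imp heX fun T h => iff_of_true h heX
    · exact ((hcol e heE heu).resolve_left heX).imp fun T h => iff_of_false h heX
  have hsplit : ∀ e ∈ U, ∀ w, Realization M A w →
      ∃ v, Realization M A v ∧ SplitShift 𝔉 (fun T => e ∈ T ↔ e ∈ X) w v := by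
    rintro e ⟨heE, heu⟩ w hw
    obtain ⟨a, ha, hne⟩ := exists_ne_of_not_certain heu (hw e heE)
    exact ⟨_, hw.update ha, splitShift_update (fun S hS => hE.subset (h𝔉 S hS)) hne _⟩
  have hmin : MinAttains 𝔉 (Realization M A) fun _ => True := fun w _ =>
    (exists_isMinIn (hE.finite_subsets.subset h𝔉) hne w).imp fun _ h => ⟨h, trivial⟩
  refine exists_forall_isMinIn_of_eqOn hE h𝔉 (fun _ _ => Realization.eqOn)
    (MinAttains.forall_mem (hE.subset (sep_subset _ _)) hmin hsplit hcolU) fun T D hT hD => ?_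
  ext e
  rw [mem_inter_iff, mem_inter_iff]
  exact and_congr_left fun heU => (hT e heU).trans (hD e heU).symm

lemma IsRevelation.subset {X : Set α} (h : IsRevelation M A X B) (e : α) : B e ⊆ A e := by
  by_cases he : e ∈ X
  · obtain ⟨r, hr, hBe⟩ := h.1 e he
    rw [hBe]
    exact singleton_subset_iff.2 hr
  · rw [h.2 e he]

lemma IsRevelation.certain {X : Set α} (h : IsRevelation M A X B) {e : α} (he : e ∈ X) :
    Certain B e :=
  let ⟨r, _, hBe⟩ := h.1 e he
  ⟨r, hBe⟩

lemma Colored.anti {e : α} (hBA : ∀ e, B e ⊆ A e) (h : Colored M A e) : Colored M B e :=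
  h.imp (fun hb => MinAttains.mono hb fun _ => Realization.mono hBA)
    (fun hr => MinAttains.mono hr fun _ => Realization.mono hBA)

end Realizations

theorem uncolored_uncertain_feasible_general (M : Matroid α) (A : α → Set ℝ)
    (hE : M.E.Finite) :
    FeasibleQuery M A {e ∈ M.E | ¬ Certain A e ∧ ¬ Colored M A e} := by
  refine ⟨sep_subset _ _, fun B hB => ?_⟩
  have hcol : ∀ e ∈ M.E, ¬ Certain B e → Colored M B e := by
    intro e heE heu
    have heF : e ∉ {e ∈ M.E | ¬ Certain A e ∧ ¬ Colored M A e} := fun heF => heu (hB.certain heF)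
    have heuA : ¬ Certain A e := fun ⟨r, hr⟩ => heu ⟨r, (hB.2 e heF).trans hr⟩
    exact Colored.anti hB.subset (not_not.1 fun h => heF ⟨heE, heuA, h⟩)
  -- `Colored` and `IsUOB` unfold to `MinAttains` and `IsMinIn` for the family of bases
  exact exists_forall_isMinIn_of_colored hE (fun _ => IsBase.subset_ground) M.exists_isBase hcol

/-- The set of all uncertain uncolored elements is a feasible query. -/
theorem uncolored_uncertain_feasible (M : Matroid α) (A : α → Set ℝ)
    (hE : M.E.Finite) (hA : IsAreaFun M A) :
    FeasibleQuery M A {e ∈ M.E | ¬ Certain A e ∧ ¬ Colored M A e} :=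
  uncolored_uncertain_feasible_general M A hE
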